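/- Let 1 ≤ k ≤ m ≤ 2n, let S be a white (k,m)-regular set of integers, let s be a black label of the scheme of (S,k,m) (that is, s = m, or k ≤ s < m and s ∈ S), and let t be an integer with k−1 ≤ t < s. Then S is white (1+t,s)-regular if and only if either ψ(t)−1 is a white label of the scheme of (S,k,m) (that is, ψ(t)−1 = k−1, or k ≤ ψ(t)−1 < m and ψ(t)−1 ∉ S) or ψ(t)−1 ∉ [t,s]. In particular, if t is a black label of the scheme or t = k−1, then S is white (1+t,s)-regular. -/

import Mathlib

namespace Kh

/-- `ψ(a) = 2n − a + 1`. -/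
def psi (n a : ℕ) : ℕ := 2 * n - a + 1

/-- White `(k,m)`-regularity of a set `S`: if `k ≤ n < m` then for every `i` with
`k−1 ≤ i < m` and `k ≤ ψ(i) ≤ m+1`, at least one of `i`, `ψ(i)−1` does not belong to
`S ∪ {k−1, m}`; if `m ≤ n` or `k > n` the condition is vacuous. -/
def whiteReg (n : ℕ) (S : Set ℕ) (k m : ℕ) : Prop :=
  k ≤ n → n < m →
    ∀ i, k - 1 ≤ i → i < m → k ≤ psi n i → psi n i ≤ m + 1 →
      i ∉ S ∪ {k - 1, m} ∨ psi n i - 1 ∉ S ∪ {k - 1, m}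

/-- Black `(k,m)`-regularity of a set `S`: if `k ≤ n < m` then for every `i` with
`k ≤ i ≤ m` and `k ≤ ψ(i) ≤ m+1`, at least one of `i`, `ψ(i)−1` belongs to
`S ∖ {k−1, m}`; if `m ≤ n` or `k > n` the condition is vacuous. -/
def blackReg (n : ℕ) (S : Set ℕ) (k m : ℕ) : Prop :=
  k ≤ n → n < m →
    ∀ i, k ≤ i → i ≤ m → k ≤ psi n i → psi n i ≤ m + 1 →
      i ∈ S \ {k - 1, m} ∨ psi n i - 1 ∈ S \ {k - 1, m}

/-- `(k,m)`-regularity: white or black `(k,m)`-regular. -/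
def isReg (n : ℕ) (S : Set ℕ) (k m : ℕ) : Prop :=
  whiteReg n S k m ∨ blackReg n S k m

/-- `a` is a white label of the scheme of `(S,k,m)`. -/
def whiteLabel (S : Set ℕ) (k m a : ℕ) : Prop :=
  a = k - 1 ∨ (k ≤ a ∧ a < m ∧ a ∉ S)

/-- `a` is a black label of the scheme of `(S,k,m)`. -/
def blackLabel (S : Set ℕ) (k m a : ℕ) : Prop :=
  a = m ∨ (k ≤ a ∧ a < m ∧ a ∈ S)

/-- The superposed scheme of `(S,k,m)` and `(T,i,j)` is balanced: there are no labels
`t < s` with `t` white on both schemes and `s` black on both schemes. -/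
def balanced (S : Set ℕ) (k m : ℕ) (T : Set ℕ) (i j : ℕ) : Prop :=
  ¬ ∃ t s, t < s ∧ whiteLabel S k m t ∧ whiteLabel T i j t ∧
    blackLabel S k m s ∧ blackLabel T i j s

/-- The pair `(S,k,m)`, `(T,i,j)` has form (★): `k = i`, `m = j`, and every
intermediate label belongs to exactly one of `S`, `T`. -/
def formStar (S : Set ℕ) (k m : ℕ) (T : Set ℕ) (i j : ℕ) : Prop :=
  k = i ∧ m = j ∧ ∀ a, k ≤ a → a < m → Xor' (a ∈ S) (a ∈ T)

/-- The dual set `S* = [ψ(m),ψ(k)) ∖ {ψ(s)−1 : s ∈ S}`. -/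
def starSet (n : ℕ) (S : Set ℕ) (k m : ℕ) : Set ℕ :=
  Set.Ico (psi n m) (psi n k) \ ((fun s => psi n s - 1) '' S)

/-- The superposed scheme of `(S,k,m)` and `(T,i,j)` is strongly white: no label is
black on both schemes, `k ≠ i`, and whenever `[max(k,i)−1, min(m,j)]` contains at
least two labels, the label `max(k,i)−1` is white on both schemes. -/
def stronglyWhite (S : Set ℕ) (k m : ℕ) (T : Set ℕ) (i j : ℕ) : Prop :=
  (¬ ∃ a, blackLabel S k m a ∧ blackLabel T i j a) ∧ k ≠ i ∧
    (max k i - 1 < min m j →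
      whiteLabel S k m (max k i - 1) ∧ whiteLabel T i j (max k i - 1))

/-- The superposed scheme of `(S,k,m)` and `(T,i,j)` is strongly black: no label is
white on both schemes, `m ≠ j`, and whenever `[max(k,i)−1, min(m,j)]` contains at
least two labels, the label `min(m,j)` is black on both schemes. -/
def stronglyBlack (S : Set ℕ) (k m : ℕ) (T : Set ℕ) (i j : ℕ) : Prop :=
  (¬ ∃ a, whiteLabel S k m a ∧ whiteLabel T i j a) ∧ m ≠ j ∧
    (max k i - 1 < min m j →
      blackLabel S k m (min m j) ∧ blackLabel T i j (min m j))

/-- The superposed scheme is strong: strongly white or strongly black. -/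
def strong (S : Set ℕ) (k m : ℕ) (T : Set ℕ) (i j : ℕ) : Prop :=
  stronglyWhite S k m T i j ∨ stronglyBlack S k m T i j

/-!
For `k ≤ n < m ≤ 2n`, white `(k,m)`-regularity says that of each pair of labels `i + j = 2n`
in `[k-1, m]`, at least one lies outside `S ∪ {k-1, m}`. On the subscheme `[t, s]`, a label
`a > t` in `S ∪ {t, s}` already lies in `S ∪ {k-1, m}`, because `s` is black. So the only pair
that can break `(1+t, s)`-regularity is `{t, 2n - t}`, where `t` is an endpoint: the condition
is that `2n - t = ψ(t) - 1`, if it lies in `[t, s]`, is an interior white label.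
-/

section

variable {n k m s t : ℕ} {S : Set ℕ}

theorem psi_sub_one {a : ℕ} (h : a ≤ 2 * n) : psi n a - 1 = 2 * n - a := by
  unfold psi; omega

theorem blackLabel.le (hs : blackLabel S k m s) : s ≤ m := by
  rcases hs with rfl | ⟨-, h, -⟩ <;> omega

theorem blackLabel.ne_of_notMem {a : ℕ} (hs : blackLabel S k m s) (ham : a < m) (haS : a ∉ S) :
    a ≠ s := by
  rintro rfl
  rcases hs with rfl | ⟨-, -, h⟩
  · exact ham.ne rfl
  · exact haS h

theorem blackLabel.mem_union_of_mem_union {a : ℕ} (hs : blackLabel S k m s) (hta : t < a)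
    (ha : a ∈ S ∪ {t, s}) : a ∈ S ∪ {k - 1, m} := by
  simp only [Set.mem_union, Set.mem_insert_iff, Set.mem_singleton_iff] at ha ⊢
  rcases ha with h | rfl | rfl
  · exact Or.inl h
  · omega
  · rcases hs with rfl | ⟨-, -, h⟩
    · exact Or.inr (Or.inr rfl)
    · exact Or.inl h

/-- `n` is paired with itself, so white regularity forces it to be white. -/
theorem whiteReg.whiteLabel_self (hreg : whiteReg n S k m) (hkn : k - 1 ≤ n) (hnm : n < m) :
    whiteLabel S k m n := by
  rcases Nat.lt_or_ge n k with hnk | hkn'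
  · exact Or.inl (by omega)
  · have h := hreg hkn' hnm n hkn hnm (by unfold psi; omega) (by unfold psi; omega)
    rw [psi_sub_one (by omega), show 2 * n - n = n by omega, or_self] at h
    simp only [Set.mem_union, Set.mem_insert_iff, Set.mem_singleton_iff, not_or] at h
    exact Or.inr ⟨hkn', hnm, h.1⟩

theorem whiteReg.restrict_iff (hm : m ≤ 2 * n) (hreg : whiteReg n S k m)
    (hs : blackLabel S k m s) (hkt : k - 1 ≤ t) (hts : t < s) :
    whiteReg n S (1 + t) s ↔
      (t < n → n < s → 2 * n - t ≤ s → 2 * n - t ∉ S ∧ 2 * n - t < s) := by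
  have hsm := hs.le
  unfold whiteReg
  rw [Nat.add_sub_cancel_left]
  constructor
  · intro hw htn hns hjs
    have h := hw (by omega) hns t le_rfl hts (by unfold psi; omega) (by unfold psi; omega)
    rw [psi_sub_one (by omega)] at h
    simp only [Set.mem_union, Set.mem_insert_iff, Set.mem_singleton_iff, not_or,
      not_true_eq_false, false_and, and_false, false_or] at h
    exact ⟨h.1, by omega⟩
  · intro hpair htn hns i hti his hψ hψ'
    unfold psi at hψ hψ'
    rw [psi_sub_one (by omega)]
    have hout (hjs : 2 * n - t ≤ s) : 2 * n - t ∉ S ∪ {t, s} := by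
      obtain ⟨hS, hlt⟩ := hpair (by omega) hns hjs
      simp only [Set.mem_union, Set.mem_insert_iff, Set.mem_singleton_iff, not_or]
      exact ⟨hS, by omega, by omega⟩
    by_cases hit : i = t
    · subst hit; exact Or.inr (hout (by omega))
    by_cases hjt : 2 * n - i = t
    · obtain rfl : i = 2 * n - t := by omega
      exact Or.inl (hout (by omega))
    have h := hreg (by omega) (by omega) i (by omega) (by omega) (by unfold psi; omega)
      (by unfold psi; omega)
    rw [psi_sub_one (by omega)] at h
    exact h.imp (mt (hs.mem_union_of_mem_union (by omega)))
      (mt (hs.mem_union_of_mem_union (by omega)))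

theorem whiteReg.restrict_iff_whiteLabel (hm : m ≤ 2 * n) (hreg : whiteReg n S k m)
    (hs : blackLabel S k m s) (hkt : k - 1 ≤ t) (hts : t < s) :
    whiteReg n S (1 + t) s ↔ whiteLabel S k m (psi n t - 1) ∨ psi n t - 1 ∉ Set.Icc t s := by
  have hsm := hs.le
  rw [hreg.restrict_iff hm hs hkt hts, psi_sub_one (by omega), Set.mem_Icc]
  by_cases hmid : t < n ∧ n < s
  · simp only [hmid.1, hmid.2, true_implies]
    constructor
    · intro hpair
      by_cases hjs : 2 * n - t ≤ s
      · obtain ⟨hS, hlt⟩ := hpair hjs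
        exact Or.inl (Or.inr ⟨by omega, by omega, hS⟩)
      · exact Or.inr (by omega)
    · rintro (hw | hj) hjs
      · rcases hw with h | ⟨-, hjm, hS⟩
        · omega
        · exact ⟨hS, lt_of_le_of_ne hjs (hs.ne_of_notMem hjm hS)⟩
      · omega
  · refine ⟨fun _ => ?_, fun _ htn hns => absurd ⟨htn, hns⟩ hmid⟩
    by_cases hj : t ≤ 2 * n - t ∧ 2 * n - t ≤ s
    · obtain rfl : t = n := by omega
      left
      rw [show 2 * t - t = t by omega]
      exact hreg.whiteLabel_self hkt (by omega)
    · exact Or.inr hj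

theorem whiteReg.restrict_of_blackLabel (hm : m ≤ 2 * n) (hreg : whiteReg n S k m)
    (hs : blackLabel S k m s) (hkt : k - 1 ≤ t) (hts : t < s)
    (ht : blackLabel S k m t ∨ t = k - 1) : whiteReg n S (1 + t) s := by
  have hsm := hs.le
  rw [hreg.restrict_iff hm hs hkt hts]
  intro htn hns hjs
  have htmem : t ∈ S ∪ {k - 1, m} := by
    simp only [Set.mem_union, Set.mem_insert_iff, Set.mem_singleton_iff]
    rcases ht with (h | ⟨-, -, h⟩) | h <;> simp [h]
  have h := hreg (by omega) (by omega) t hkt (by omega) (by unfold psi; omega)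
    (by unfold psi; omega)
  rw [psi_sub_one (by omega)] at h
  simp only [Set.mem_union, Set.mem_insert_iff, Set.mem_singleton_iff, not_or] at h htmem
  rcases h with ⟨hS, hk, hm'⟩ | ⟨hS, -, hjm⟩
  · rcases htmem with h | h | h <;> contradiction
  · exact ⟨hS, lt_of_le_of_ne hjs (hs.ne_of_notMem (by omega) hS)⟩

end

theorem stmt10_general (n k m : ℕ) (hm : m ≤ 2 * n)
    (S : Set ℕ) (hreg : whiteReg n S k m) (s t : ℕ)
    (hs : blackLabel S k m s) (ht1 : k - 1 ≤ t) (hts : t < s) :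
    (whiteReg n S (1 + t) s ↔
      (whiteLabel S k m (psi n t - 1) ∨ psi n t - 1 ∉ Set.Icc t s)) ∧
    ((blackLabel S k m t ∨ t = k - 1) → whiteReg n S (1 + t) s) :=
  ⟨hreg.restrict_iff_whiteLabel hm hs ht1 hts, hreg.restrict_of_blackLabel hm hs ht1 hts⟩

/-- Lemma `si`. Let `S` be a white `(k,m)`-regular set, `s` a black
label of the scheme of `(S,k,m)` and `k−1 ≤ t < s`. Then `S` is white `(1+t,s)`-regular
iff either `ψ(t)−1` is a white label of the scheme or `ψ(t)−1 ∉ [t,s]`. In particular,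
if `t` is a black label or `t = k−1`, then `S` is white `(1+t,s)`-regular. -/
theorem stmt10 (n k m : ℕ) (hn : 1 ≤ n) (hk : 1 ≤ k) (hkm : k ≤ m) (hm : m ≤ 2 * n)
    (S : Set ℕ) (hreg : whiteReg n S k m) (s t : ℕ)
    (hs : blackLabel S k m s) (ht1 : k - 1 ≤ t) (hts : t < s) :
    (whiteReg n S (1 + t) s ↔
      (whiteLabel S k m (psi n t - 1) ∨ psi n t - 1 ∉ Set.Icc t s)) ∧
    ((blackLabel S k m t ∨ t = k - 1) → whiteReg n S (1 + t) s) :=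
  stmt10_general n k m hm S hreg s t hs ht1 hts

end Kh
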